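/- Let μ and η be trigonometric polynomials on ℝ² whose Fourier coefficients are supported in rectangles of size k₁×k₂ and l₁×l₂ respectively. If P[μ] and P[η] have no common non-constant polynomial factor, then the system μ(x) = η(x) = 0 has at most (k₁+k₂)(l₁+l₂) solutions in [0,1)². -/

import Mathlib

open scoped Real

/-- The `k₁ × k₂` rectangle of Fourier indices `{0,…,k₁-1} × {0,…,k₂-1}`. -/
def rect (k₁ k₂ : ℕ) : Finset (ℕ × ℕ) := Finset.range k₁ ×ˢ Finset.range k₂

noncomputable def trigPolyNat (Λ : Finset (ℕ × ℕ)) (c : ℕ × ℕ → ℂ) (x : ℝ × ℝ) : ℂ :=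
  ∑ k ∈ Λ, c k * Complex.exp (2 * Real.pi * Complex.I * ((k.1 : ℂ) * (x.1 : ℂ) + (k.2 : ℂ) * (x.2 : ℂ)))

noncomputable def assocPoly (Λ : Finset (ℕ × ℕ)) (c : ℕ × ℕ → ℂ) : MvPolynomial (Fin 2) ℂ :=
  ∑ k ∈ Λ, MvPolynomial.C (c k) * MvPolynomial.X 0 ^ k.1 * MvPolynomial.X 1 ^ k.2

/-!
Substituting `zᵢ = exp (2πi xᵢ)` turns the two trigonometric polynomials into polynomials
`p, q ∈ ℂ[z₁, z₂]` of degree `< kᵢ`, resp. `< lᵢ`, in `zᵢ`, and the substitution is injective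
on `[0,1)²`. For a finite set `T` of common zeros of coprime `p` and `q`, with `s = #T`, consider
`(A, B) ↦ p A + q B` from the polynomials whose degree in `zᵢ` is at most `deg_i q + s`, resp.
`deg_i p + s`, to those of degree at most `deg_i p + deg_i q + s`. Its image lies in the
subspace of polynomials vanishing on `T`, of codimension `#T` by Lagrange interpolation, and by
coprimality its kernel consists of the pairs `(q C, -p C)`. Counting dimensions gives
`#T ≤ deg₁ p · deg₂ q + deg₂ p · deg₁ q`.
-/

open Finset Module MvPolynomial

theorem Set.finite_and_ncard_le_of_forall_finset_card_le {α : Type*} {s : Set α} {n : ℕ}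
    (h : ∀ t : Finset α, ↑t ⊆ s → #t ≤ n) : s.Finite ∧ s.ncard ≤ n := by
  have hs : s.Finite := by
    by_contra hinf
    obtain ⟨t, hts, ht⟩ := Set.Infinite.exists_subset_card_eq hinf (n + 1)
    have := h t hts
    omega
  exact ⟨hs, by simpa [← Set.ncard_coe_finset] using h hs.toFinset (by simp)⟩

theorem Finsupp.setOf_forall_le_eq_Iic {σ : Type*} [Finite σ] (N : σ → ℕ) :
    {e : σ →₀ ℕ | ∀ i, e i ≤ N i} = Set.Iic (Finsupp.equivFunOnFinite.symm N) := by
  ext e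
  simp [Finsupp.le_def]

theorem finrank_add_finrank_le_of_ker_le_range {K U V W B : Type*} [DivisionRing K]
    [AddCommGroup U] [AddCommGroup V] [AddCommGroup W] [AddCommGroup B]
    [Module K U] [Module K V] [Module K W] [Module K B]
    [FiniteDimensional K U] [FiniteDimensional K V] [FiniteDimensional K B]
    {φ : V →ₗ[K] W} (hφ : Function.Surjective φ) {L : U →ₗ[K] V}
    (hφL : LinearMap.range L ≤ LinearMap.ker φ) {ι : B →ₗ[K] U}
    (hL : LinearMap.ker L ≤ LinearMap.range ι) :
    finrank K W + finrank K U ≤ finrank K V + finrank K B := by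
  have hV := φ.finrank_range_add_finrank_ker
  rw [LinearMap.range_eq_top.mpr hφ, finrank_top] at hV
  have hU := L.finrank_range_add_finrank_ker
  have hrange := Submodule.finrank_mono hφL
  have hker := (Submodule.finrank_mono hL).trans ι.finrank_range_le
  omega

theorem IsRelPrime.exists_eq_mul_of_mul_add_mul_eq_zero {R : Type*} [CommRing R] [IsDomain R]
    [DecompositionMonoid R] {p q a b : R} (hpq : IsRelPrime p q) (hq : q ≠ 0)
    (h : p * a + q * b = 0) : ∃ c, a = q * c ∧ b = -(p * c) := by
  obtain ⟨c, rfl⟩ : q ∣ a := hpq.symm.dvd_of_dvd_mul_left ⟨-b, by linear_combination h⟩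
  have : q * (b + p * c) = 0 := by linear_combination h
  exact ⟨c, rfl, by linear_combination (mul_eq_zero.mp this).resolve_left hq⟩

namespace MvPolynomial

section RestrictDegreeOf

variable {σ R : Type*} [CommSemiring R]

variable (R) in
noncomputable def restrictDegreeOf (N : σ → ℕ) : Submodule R (MvPolynomial σ R) :=
  restrictSupport R {e | ∀ i, e i ≤ N i}

variable {N M : σ → ℕ} {p q : MvPolynomial σ R}

theorem mem_restrictDegreeOf : p ∈ restrictDegreeOf R N ↔ ∀ i, degreeOf i p ≤ N i := by
  simp only [restrictDegreeOf, mem_restrictSupport_iff, degreeOf_le_iff]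
  exact ⟨fun h i e he => h he i, fun h e he i => h i e he⟩

theorem restrictDegreeOf_mono (h : N ≤ M) : restrictDegreeOf R N ≤ restrictDegreeOf R M :=
  restrictSupport_mono R fun _ he i => (he i).trans (h i)

theorem mul_mem_restrictDegreeOf (hp : p ∈ restrictDegreeOf R M)
    (hq : q ∈ restrictDegreeOf R N) : p * q ∈ restrictDegreeOf R (M + N) := by
  rw [mem_restrictDegreeOf] at *
  exact fun i => (degreeOf_mul_le i p q).trans (add_le_add (hp i) (hq i))

theorem mul_mem_restrictDegreeOf_degreeOf_add (hq : q ∈ restrictDegreeOf R N) :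
    p * q ∈ restrictDegreeOf R ((degreeOf · p) + N) :=
  mul_mem_restrictDegreeOf (mem_restrictDegreeOf.mpr fun _ => le_rfl) hq

theorem mem_restrictDegreeOf_of_mul_mem [NoZeroDivisors R] (hq : q ≠ 0)
    (h : q * p ∈ restrictDegreeOf R ((degreeOf · q) + N)) : p ∈ restrictDegreeOf R N := by
  rcases eq_or_ne p 0 with rfl | hp
  · exact zero_mem _
  rw [mem_restrictDegreeOf] at *
  intro i
  have := h i
  rw [degreeOf_mul_eq hq hp, Pi.add_apply] at this
  omega

instance [Finite σ] : Module.Finite R (restrictDegreeOf R N) := by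
  classical
  have : Finite {e : σ →₀ ℕ | ∀ i, e i ≤ N i} := by
    rw [Finsupp.setOf_forall_le_eq_Iic]; exact Set.finite_Iic _ |>.to_subtype
  exact Module.Finite.of_basis (basisRestrictSupport R _)

theorem finrank_restrictDegreeOf [Fintype σ] [StrongRankCondition R] :
    finrank R (restrictDegreeOf R N) = ∏ i, (N i + 1) := by
  classical
  rw [restrictDegreeOf, finrank_eq_nat_card_basis (basisRestrictSupport R _),
    Finsupp.setOf_forall_le_eq_Iic, ← Finset.coe_Iic, Nat.card_coe_set_eq, Set.ncard_coe_finset,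
    Finsupp.card_Iic]
  rw [Finset.prod_subset (Finset.subset_univ _) fun i _ hi => by simp_all]
  simp

end RestrictDegreeOf

section Interpolation

variable {σ K : Type*} [Field K]

theorem exists_mem_restrictDegreeOf_eval_eq_ite [DecidableEq (σ → K)] (T : Finset (σ → K))
    {t : σ → K} (ht : t ∈ T) :
    ∃ f ∈ restrictDegreeOf K (fun _ => #T - 1), ∀ u ∈ T, eval u f = if u = t then 1 else 0 := by
  classical
  choose j hj using fun u (hu : u ∈ T.erase t) => Function.ne_iff.mp (T.ne_of_mem_erase hu)
  refine ⟨∏ u ∈ (T.erase t).attach,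
    C (t (j u u.2) - u.1 (j u u.2))⁻¹ * (X (j u u.2) - C (u.1 (j u u.2))), ?_, ?_⟩
  · refine mem_restrictDegreeOf.mpr fun i => (degreeOf_prod_le i _ _).trans ?_
    rw [← card_erase_of_mem ht, ← card_attach, card_eq_sum_ones]
    refine sum_le_sum fun u _ => (degreeOf_C_mul_le _ _ _).trans <|
      (degreeOf_sub_le _ _ _).trans ?_
    rw [degreeOf_X, degreeOf_C]
    split_ifs <;> simp
  · intro u hu
    simp only [map_prod, map_mul, map_sub, eval_C, eval_X]
    split_ifs with hut
    · subst hut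
      exact prod_eq_one fun v _ => inv_mul_cancel₀ (sub_ne_zero.mpr (hj v v.2).symm)
    · exact prod_eq_zero (mem_attach _ ⟨u, mem_erase.mpr ⟨hut, hu⟩⟩) (by simp)

variable (K) in
noncomputable def evalOn (T : Finset (σ → K)) : MvPolynomial σ K →ₗ[K] (T → K) :=
  LinearMap.pi fun u => (aeval (u : σ → K)).toLinearMap

theorem surjective_evalOn_comp_subtype {T : Finset (σ → K)} {N : σ → ℕ}
    (hN : ∀ i, #T ≤ N i + 1) :
    Function.Surjective (evalOn K T ∘ₗ (restrictDegreeOf K N).subtype) := by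
  classical
  rw [← LinearMap.range_eq_top, eq_top_iff, ← (Pi.basisFun K T).span_eq, Submodule.span_le]
  rintro _ ⟨t, rfl⟩
  obtain ⟨f, hf, hft⟩ := exists_mem_restrictDegreeOf_eval_eq_ite T t.2
  refine ⟨⟨f, restrictDegreeOf_mono (fun i => by have := hN i; dsimp; omega) hf⟩, ?_⟩
  ext u
  rw [Pi.basisFun_apply]
  change eval (u : σ → K) f = _
  simp only [hft u u.2, Pi.single_apply, Subtype.coe_inj]

end Interpolation

section Bezout

variable {σ K : Type*} [Field K] [Fintype σ]

theorem card_add_finrank_le_of_isRelPrime {p q : MvPolynomial σ K} (hpq : IsRelPrime p q)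
    (hq : q ≠ 0) {T : Finset (σ → K)} (hT : ∀ z ∈ T, eval z p = 0 ∧ eval z q = 0)
    {N : σ → ℕ} (hN : ∀ i, #T ≤ N i + 1) :
    #T + (finrank K (restrictDegreeOf K ((degreeOf · q) + N)) +
        finrank K (restrictDegreeOf K ((degreeOf · p) + N))) ≤
      finrank K (restrictDegreeOf K ((degreeOf · p) + (degreeOf · q) + N)) +
        finrank K (restrictDegreeOf K N) := by
  let L : restrictDegreeOf K ((degreeOf · q) + N) × restrictDegreeOf K ((degreeOf · p) + N) →ₗ[K]
      restrictDegreeOf K ((degreeOf · p) + (degreeOf · q) + N) :=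
    LinearMap.codRestrict _ ((LinearMap.mulLeft K p ∘ₗ Submodule.subtype _).coprod
      (LinearMap.mulLeft K q ∘ₗ Submodule.subtype _)) fun AB => add_mem
        (restrictDegreeOf_mono (le_of_eq (by abel))
          (mul_mem_restrictDegreeOf_degreeOf_add (p := p) AB.1.2))
        (restrictDegreeOf_mono (le_of_eq (by abel))
          (mul_mem_restrictDegreeOf_degreeOf_add (p := q) AB.2.2))
  let ι : restrictDegreeOf K N →ₗ[K]
      restrictDegreeOf K ((degreeOf · q) + N) × restrictDegreeOf K ((degreeOf · p) + N) :=
    (LinearMap.codRestrict _ (LinearMap.mulLeft K q ∘ₗ Submodule.subtype _)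
        fun C => mul_mem_restrictDegreeOf_degreeOf_add C.2).prod
      (LinearMap.codRestrict _ (-(LinearMap.mulLeft K p ∘ₗ Submodule.subtype _))
        fun C => neg_mem (mul_mem_restrictDegreeOf_degreeOf_add C.2))
  have hrange : LinearMap.range L ≤ LinearMap.ker (evalOn K T ∘ₗ Submodule.subtype _) := by
    rintro _ ⟨AB, rfl⟩
    rw [LinearMap.mem_ker]
    ext u
    show eval (u : σ → K) (p * AB.1 + q * AB.2) = 0
    simp [(hT u u.2).1, (hT u u.2).2]
  have hker : LinearMap.ker L ≤ LinearMap.range ι := by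
    rintro ⟨A, B⟩ hAB
    obtain ⟨C, hA, hB⟩ := hpq.exists_eq_mul_of_mul_add_mul_eq_zero hq
      (congrArg Subtype.val hAB : p * A + q * B = 0)
    have hC : C ∈ restrictDegreeOf K N := mem_restrictDegreeOf_of_mul_mem hq (hA ▸ A.2)
    exact ⟨⟨C, hC⟩, Prod.ext (Subtype.ext hA.symm) (Subtype.ext hB.symm)⟩
  simpa [Module.finrank_prod] using finrank_add_finrank_le_of_ker_le_range
    (surjective_evalOn_comp_subtype fun i => by have := hN i; dsimp; omega) hrange hker

theorem card_le_of_isRelPrime {p q : MvPolynomial (Fin 2) K} (hpq : IsRelPrime p q)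
    {T : Finset (Fin 2 → K)} (hT : ∀ z ∈ T, eval z p = 0 ∧ eval z q = 0) :
    #T ≤ degreeOf 0 p * degreeOf 1 q + degreeOf 1 p * degreeOf 0 q := by
  obtain rfl | ⟨t, ht⟩ := T.eq_empty_or_nonempty
  · simp
  have hq : q ≠ 0 := by
    rintro rfl
    exact ((isRelPrime_zero_right.mp hpq).map (eval t)).ne_zero (hT t ht).1
  have := card_add_finrank_le_of_isRelPrime hpq hq hT (N := fun _ => #T) fun _ => by omega
  simp only [finrank_restrictDegreeOf, Fin.prod_univ_two, Pi.add_apply] at this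
  nlinarith

theorem finite_and_ncard_setOf_eval_eq_zero_le {p q : MvPolynomial (Fin 2) K}
    (hpq : IsRelPrime p q) :
    {z : Fin 2 → K | eval z p = 0 ∧ eval z q = 0}.Finite ∧
      {z : Fin 2 → K | eval z p = 0 ∧ eval z q = 0}.ncard ≤
        degreeOf 0 p * degreeOf 1 q + degreeOf 1 p * degreeOf 0 q :=
  Set.finite_and_ncard_le_of_forall_finset_card_le fun _ hT =>
    card_le_of_isRelPrime hpq fun _ hz => hT hz

end Bezout

end MvPolynomial

open Complex

noncomputable def torusPoint (x : ℝ × ℝ) : Fin 2 → ℂ :=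
  ![cexp (2 * π * I * x.1), cexp (2 * π * I * x.2)]

theorem trigPolyNat_eq_eval_torusPoint (Λ : Finset (ℕ × ℕ)) (c : ℕ × ℕ → ℂ) (x : ℝ × ℝ) :
    trigPolyNat Λ c x = eval (torusPoint x) (assocPoly Λ c) := by
  simp only [trigPolyNat, assocPoly, map_sum, map_mul, map_pow, eval_C, eval_X, torusPoint,
    Matrix.cons_val_zero, Matrix.cons_val_one, ← Complex.exp_nat_mul, mul_assoc, ← Complex.exp_add]
  refine Finset.sum_congr rfl fun k _ => ?_
  ring_nf

theorem injOn_cexp_two_pi_mul_I_mul :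
    Set.InjOn (fun t : ℝ => cexp (2 * π * I * t)) (Set.Ico 0 1) := by
  have hIco {t : ℝ} (ht : t ∈ Set.Ico 0 1) : 2 * π * t ∈ Set.Ico 0 (2 * π) :=
    ⟨by nlinarith [ht.1, Real.pi_pos], by nlinarith [ht.2, Real.pi_pos]⟩
  intro s hs t ht hst
  have h := Circle.exp_injOn_Ico (by simp) (hIco hs) (hIco ht)
    (Circle.ext (by simpa [Circle.coe_exp, mul_comm, mul_left_comm] using hst))
  simpa [Real.pi_ne_zero] using h

theorem injOn_torusPoint : Set.InjOn torusPoint (Set.Ico 0 1 ×ˢ Set.Ico 0 1) := by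
  intro x hx y hy hxy
  exact Prod.ext (injOn_cexp_two_pi_mul_I_mul hx.1 hy.1 (congrFun hxy 0))
    (injOn_cexp_two_pi_mul_I_mul hx.2 hy.2 (congrFun hxy 1))

theorem assocPoly_rect_mem_restrictDegreeOf (k₁ k₂ : ℕ) (c : ℕ × ℕ → ℂ) :
    assocPoly (rect k₁ k₂) c ∈ restrictDegreeOf ℂ ![k₁ - 1, k₂ - 1] := by
  refine Submodule.sum_mem _ fun k hk => ?_
  obtain ⟨h₁, h₂⟩ := Finset.mem_product.mp hk
  rw [Finset.mem_range] at h₁ h₂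
  rw [C_mul_X_pow_eq_monomial, X_pow_eq_monomial, monomial_mul, mul_one, restrictDegreeOf,
    monomial_mem_restrictSupport]
  refine Or.inl fun i => ?_
  fin_cases i <;> simp <;> omega

/-- Bézout's inequality for band-limited (trigonometric) polynomials: if `μ` and `η` have
Fourier support in rectangles of sizes `k₁ × k₂` and `l₁ × l₂` and their associated complex
polynomials have no common non-constant factor, the system `μ(x) = η(x) = 0` has at most
`(k₁+k₂)(l₁+l₂)` solutions in `[0,1)²`. -/
theorem bezout_trigPoly (k₁ k₂ l₁ l₂ : ℕ) (c d : ℕ × ℕ → ℂ)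
    (hcop : ∀ p : MvPolynomial (Fin 2) ℂ,
      p ∣ assocPoly (rect k₁ k₂) c → p ∣ assocPoly (rect l₁ l₂) d → IsUnit p) :
    {x : ℝ × ℝ | x.1 ∈ Set.Ico (0 : ℝ) 1 ∧ x.2 ∈ Set.Ico (0 : ℝ) 1 ∧
        trigPolyNat (rect k₁ k₂) c x = 0 ∧ trigPolyNat (rect l₁ l₂) d x = 0}.Finite ∧
    {x : ℝ × ℝ | x.1 ∈ Set.Ico (0 : ℝ) 1 ∧ x.2 ∈ Set.Ico (0 : ℝ) 1 ∧
        trigPolyNat (rect k₁ k₂) c x = 0 ∧ trigPolyNat (rect l₁ l₂) d x = 0}.ncard ≤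
      (k₁ + k₂) * (l₁ + l₂) := by
  set Z := {x : ℝ × ℝ | x.1 ∈ Set.Ico (0 : ℝ) 1 ∧ x.2 ∈ Set.Ico (0 : ℝ) 1 ∧
    trigPolyNat (rect k₁ k₂) c x = 0 ∧ trigPolyNat (rect l₁ l₂) d x = 0}
  set P := assocPoly (rect k₁ k₂) c
  set Q := assocPoly (rect l₁ l₂) d
  obtain ⟨hfin, hcard⟩ := finite_and_ncard_setOf_eval_eq_zero_le (p := P) (q := Q) hcop
  have hmaps : Set.MapsTo torusPoint Z {z | eval z P = 0 ∧ eval z Q = 0} := by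
    rintro x ⟨-, -, hμ, hη⟩
    rw [trigPolyNat_eq_eval_torusPoint] at hμ hη
    exact ⟨hμ, hη⟩
  have hinj : Set.InjOn torusPoint Z :=
    injOn_torusPoint.mono fun _ hx => Set.mem_prod.mpr ⟨hx.1, hx.2.1⟩
  have hP := mem_restrictDegreeOf.mp (assocPoly_rect_mem_restrictDegreeOf k₁ k₂ c)
  have hQ := mem_restrictDegreeOf.mp (assocPoly_rect_mem_restrictDegreeOf l₁ l₂ d)
  refine ⟨hfin.of_injOn hmaps hinj, (Set.ncard_le_ncard_of_injOn _ hmaps hinj hfin).trans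
    (hcard.trans ?_)⟩
  calc _ ≤ (k₁ - 1) * (l₂ - 1) + (k₂ - 1) * (l₁ - 1) :=
        add_le_add (Nat.mul_le_mul (hP 0) (hQ 1)) (Nat.mul_le_mul (hP 1) (hQ 0))
    _ ≤ k₁ * l₂ + k₂ * l₁ := by gcongr <;> omega
    _ ≤ (k₁ + k₂) * (l₁ + l₂) := by nlinarith
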